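/- arXiv:2409.05741 — 4 statements merged into one kernel-verified Lean document; each statement's English description precedes it below -/
import Mathlib

section
/- For natural numbers N and k with k ≤ N, the following polynomial identity holds in ℤ[q]: (the coefficient of z^k in the polynomial ∏_{i=1}^{N} (1 + z·q^i), viewed as a polynomial in z with coefficients in ℤ[q]) multiplied by ∏_{i=1}^{k} (1 − q^i) equals q^{k(k+1)/2} · ∏_{i=1}^{k} (1 − q^{N−k+i}). (This is the denominator-cleared form of Rothe's q-binomial theorem ∏_{i=1}^{N}(1+zq^i) = Σ_{k=0}^{N} z^k · [N choose k]_q · q^{k(k+1)/2}, where [N choose k]_q = ∏_{i=1}^{k}(1−q^{N−k+i})/(1−q^i) is the Gaussian binomial coefficient.) -/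
open Polynomial Finset

private noncomputable def rotheF (N : ℕ) : Polynomial (Polynomial ℤ) :=
  ∏ i ∈ Finset.range N, (1 + Polynomial.C (Polynomial.X ^ (i + 1)) * Polynomial.X)

private lemma rotheF_coeff_zero (N : ℕ) : (rotheF N).coeff 0 = 1 := by
  have h : (rotheF N).coeff 0 = Polynomial.constantCoeff (rotheF N) := rfl
  rw [h, rotheF, map_prod]
  exact Finset.prod_eq_one fun i _ => by simp

private lemma rotheF_coeff_succ (N k : ℕ) :
    (rotheF (N+1)).coeff (k+1)
      = (rotheF N).coeff (k+1) + Polynomial.X ^ (N+1) * (rotheF N).coeff k := by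
  rw [rotheF, Finset.prod_range_succ, ← rotheF, mul_add, mul_one, Polynomial.coeff_add]
  congr 1
  rw [show rotheF N * (Polynomial.C (Polynomial.X ^ (N+1)) * Polynomial.X)
      = Polynomial.C (Polynomial.X ^ (N+1)) * (rotheF N * Polynomial.X) by ring,
    Polynomial.coeff_C_mul, Polynomial.coeff_mul_X]

private lemma rotheF_coeff_of_lt (N k : ℕ) (h : N < k) : (rotheF N).coeff k = 0 := by
  apply Polynomial.coeff_eq_zero_of_natDegree_lt
  calc (rotheF N).natDegree
      ≤ ∑ i ∈ Finset.range N,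
          (1 + Polynomial.C (Polynomial.X ^ (i+1)) * Polynomial.X :
            Polynomial (Polynomial ℤ)).natDegree := Polynomial.natDegree_prod_le _ _
    _ ≤ ∑ i ∈ Finset.range N, 1 := Finset.sum_le_sum (fun i _ => by compute_degree)
    _ = N := by simp
    _ < k := h

private lemma rothe_tri (j : ℕ) : (j+1) * (j+1+1) / 2 = j * (j+1) / 2 + (j+1) := by
  have ha : j*(j+1)/2*2 = j*(j+1) := Nat.div_mul_cancel (Nat.even_mul_succ_self j).two_dvd
  have hb : (j+1)*(j+1+1)/2*2 = (j+1)*(j+1+1) :=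
    Nat.div_mul_cancel (Nat.even_mul_succ_self (j+1)).two_dvd
  have hc : (j+1)*(j+1+1) = j*(j+1) + 2*(j+1) := by ring
  omega

/-- Rothe's q-binomial theorem (denominator-cleared form): the coefficient of `z^k`
in `∏_{i=1}^{N} (1 + z q^i)`, multiplied by `∏_{i=1}^{k} (1 - q^i)`, equals
`q^{k(k+1)/2} ∏_{i=1}^{k} (1 - q^{N-k+i})`. Here the bivariate polynomial ring is
`Polynomial (Polynomial ℤ)`, with the outer variable `z` and the inner variable `q`. -/
theorem rothe_q_binomial_coeff (N k : ℕ) (hkN : k ≤ N) :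
    ((∏ i ∈ Finset.range N,
        (1 + Polynomial.C (Polynomial.X ^ (i + 1)) * Polynomial.X :
          Polynomial (Polynomial ℤ))).coeff k) *
      ∏ i ∈ Finset.range k, (1 - Polynomial.X ^ (i + 1)) =
    Polynomial.X ^ (k * (k + 1) / 2) *
      ∏ i ∈ Finset.range k, (1 - Polynomial.X ^ (N - k + (i + 1))) := by
  show (rotheF N).coeff k * _ = _
  induction N generalizing k with
  | zero =>
    interval_cases k
    simp [rotheF_coeff_zero]
  | succ N ih =>
    match k, hkN with
    | 0, _ => simp [rotheF_coeff_zero]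
    | j+1, hkN =>
      rw [rotheF_coeff_succ]
      rcases Nat.lt_or_ge j N with hj | hj
      · have IH1 := ih (j+1) (by omega)
        have IH2 := ih j (by omega)
        have e1 : (Polynomial.X : Polynomial ℤ) ^ ((j+1) * (j+1+1) / 2)
            = Polynomial.X ^ (j * (j+1) / 2) * Polynomial.X ^ (j+1) := by
          rw [← pow_add, rothe_tri]
        have e2 : (Polynomial.X : Polynomial ℤ) ^ (N+1)
            = Polynomial.X ^ (N - j) * Polynomial.X ^ (j+1) := by
          rw [← pow_add]; congr 1; omega
        have hP : (∏ i ∈ Finset.range (j+1),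
              ((1 : Polynomial ℤ) - Polynomial.X ^ (N - (j+1) + (i+1))))
            = (∏ i ∈ Finset.range j, (1 - Polynomial.X ^ (N - j + (i+1))))
              * (1 - Polynomial.X ^ (N - j)) := by
          rw [Finset.prod_range_succ']
          simp only [show ∀ i, N - (j+1) + (i+1+1) = N - j + (i+1) from fun i => by omega,
            show N - (j+1) + (0+1) = N - j from by omega]
        rw [hP, Finset.prod_range_succ] at IH1
        simp only [Finset.prod_range_succ]
        simp only [show ∀ i, N + 1 - (j+1) + (i+1) = N - j + (i+1) from fun i => by omega,
          show N - j + (j+1) = N + 1 from by omega]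
        rw [e1] at IH1 ⊢; rw [e2]
        linear_combination IH1
          + Polynomial.X ^ (N - j) * Polynomial.X ^ (j+1)
            * (1 - Polynomial.X ^ (j+1)) * IH2
      · have hjN : j = N := by omega
        subst hjN
        rw [rotheF_coeff_of_lt j (j+1) (by omega), zero_add]
        have IH := ih j le_rfl
        simp only [Nat.sub_self, Nat.zero_add, zero_add] at IH ⊢
        have e1 : (Polynomial.X : Polynomial ℤ) ^ ((j+1) * (j+1+1) / 2)
            = Polynomial.X ^ (j * (j+1) / 2) * Polynomial.X ^ (j+1) := by
          rw [← pow_add, rothe_tri]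
        rw [Finset.prod_range_succ, e1]
        linear_combination Polynomial.X ^ (j+1) * (1 - Polynomial.X ^ (j+1)) * IH
end

section
/- For natural numbers N and k with k ≤ N, the sum over all k-element subsets S of {1, 2, …, N} of the quantity (Σ_{i∈S} i)² satisfies 12·Σ_{S ⊆ {1,…,N}, |S|=k} (Σ_{i∈S} i)² = C(N,k) · k · (N+1) · ((N−k) + 3k(N+1)). (This expresses that the rank-sum statistic W with sample sizes n₁ = k and n₂ = N − k has second moment E(W²) = (1/12)·n₁(n₁+n₂+1)(n₂ + 3n₁(n₁+n₂+1)) under the null hypothesis.) -/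
open Finset

lemma sum_rec (N n : ℕ) (f : Finset ℕ → ℕ) :
    ∑ S ∈ (Icc 1 (N+1)).powersetCard (n+1), f S =
      ∑ S ∈ (Icc 1 N).powersetCard (n+1), f S
      + ∑ S ∈ (Icc 1 N).powersetCard n, f (insert (N+1) S) := by
  have hnot : (N+1) ∉ Icc 1 N := by simp
  have h1 : Icc 1 (N+1) = insert (N+1) (Icc 1 N) := by
    exact (Finset.insert_Icc_right_eq_Icc_add_one (by omega)).symm
  rw [h1, Finset.powersetCard_succ_insert hnot, Finset.sum_union, Finset.sum_image]
  · intro S hS T hT h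
    have hS' : (N+1) ∉ S := fun h' => hnot ((mem_powersetCard.1 hS).1 h')
    have hT' : (N+1) ∉ T := fun h' => hnot ((mem_powersetCard.1 hT).1 h')
    have := congrArg (fun s => Finset.erase s (N+1)) h
    simpa [Finset.erase_insert hS', Finset.erase_insert hT'] using this
  · rw [Finset.disjoint_left]
    intro S hS hS'
    obtain ⟨T, hT, rfl⟩ := Finset.mem_image.1 hS'
    exact hnot ((mem_powersetCard.1 hS).1 (Finset.mem_insert_self _ _))

lemma choose_mul_self (N m : ℕ) :
    N.choose m * N = N.choose (m+1) * (m+1) + N.choose m * m := by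
  rcases le_or_gt m N with h | h
  · rw [Nat.choose_succ_right_eq, ← Nat.mul_add, Nat.sub_add_cancel h, Nat.mul_comm]
  · rw [Nat.choose_eq_zero_of_lt h, Nat.choose_eq_zero_of_lt (by omega)]; simp

lemma first_moment (N k : ℕ) :
    2 * ∑ S ∈ (Icc 1 N).powersetCard k, (∑ i ∈ S, i) =
      N.choose k * (k * (N + 1)) := by
  induction N generalizing k with
  | zero =>
    cases k with
    | zero => simp
    | succ m => simp
  | succ N ih =>
    cases k with
    | zero => simp
    | succ m =>
      rw [sum_rec]
      have hins : ∀ S ∈ (Icc 1 N).powersetCard m,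
          (∑ i ∈ insert (N+1) S, i) = (N+1) + ∑ i ∈ S, i := by
        intro S hS
        rw [Finset.sum_insert (fun h => by simpa using (mem_powersetCard.1 hS).1 h)]
      rw [Finset.sum_congr rfl hins, Finset.sum_add_distrib, Finset.sum_const]
      have hcard : ((Icc 1 N).powersetCard m).card = N.choose m := by
        rw [Finset.card_powersetCard, Nat.card_Icc]; norm_num
      have h1 := ih (m+1)
      have h2 := ih m
      have h3 := choose_mul_self N m
      have h4 : (N+1).choose (m+1) = N.choose m + N.choose (m+1) := Nat.choose_succ_succ N m
      rw [hcard, h4, smul_eq_mul]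
      zify at h1 h2 h3 ⊢
      linear_combination h1 + h2 + h3

lemma second_moment_aux (N k : ℕ) :
    12 * (∑ S ∈ (Icc 1 N).powersetCard k, (∑ i ∈ S, i) ^ 2)
      + N.choose k * (k * k * (N + 1)) =
      N.choose k * (k * (N + 1) * (N + 3 * k * (N + 1))) := by
  induction N generalizing k with
  | zero =>
    cases k with
    | zero => simp
    | succ m => simp
  | succ N ih =>
    cases k with
    | zero => simp
    | succ m =>
      rw [sum_rec]
      have hins : ∀ S ∈ (Icc 1 N).powersetCard m,
          (∑ i ∈ insert (N+1) S, i) ^ 2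
            = (∑ i ∈ S, i) ^ 2 + 2 * (N+1) * (∑ i ∈ S, i) + (N+1)^2 := by
        intro S hS
        rw [Finset.sum_insert (fun h => by simpa using (mem_powersetCard.1 hS).1 h)]
        ring
      rw [Finset.sum_congr rfl hins, Finset.sum_add_distrib, Finset.sum_add_distrib,
        Finset.sum_const, ← Finset.mul_sum, smul_eq_mul]
      have hcard : ((Icc 1 N).powersetCard m).card = N.choose m := by
        rw [Finset.card_powersetCard, Nat.card_Icc]; norm_num
      have h1 := ih (m+1)
      have h2 := ih m
      have h3 := choose_mul_self N m
      have hB1 := first_moment N m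
      have h4 : (N+1).choose (m+1) = N.choose m + N.choose (m+1) := Nat.choose_succ_succ N m
      rw [hcard, h4]
      zify at h1 h2 h3 hB1 ⊢
      linear_combination h1 + h2 + 12*((N:ℤ)+1)*hB1
        + (10 + 8*(N:ℤ) + 8*(m:ℤ) + 6*(N:ℤ)*(m:ℤ))*h3



/-- Second moment of the rank-sum statistic: the sum, over all `k`-element subsets
`S` of `{1, …, N}`, of `(∑_{i∈S} i)²` satisfies
`12 · Σ_S (Σ_{i∈S} i)² = C(N,k) · k · (N+1) · ((N−k) + 3k(N+1))`,
i.e. `E(W²) = (1/12) n₁(n₁+n₂+1)(n₂ + 3n₁(n₁+n₂+1))` with `n₁ = k`, `n₂ = N−k`. -/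
theorem rank_sum_second_moment (N k : ℕ) (hkN : k ≤ N) :
    12 * ∑ S ∈ (Finset.Icc 1 N).powersetCard k, (∑ i ∈ S, i) ^ 2 =
      N.choose k * (k * (N + 1) * ((N - k) + 3 * k * (N + 1))) := by
  have h := second_moment_aux N k
  zify [hkN] at h ⊢
  linear_combination h
end

section
/- Let N ≥ 2 and 1 ≤ k ≤ N be natural numbers and let R : Fin N → ℝ be any function satisfying Σ_{i} R(i) = N(N+1)/2. Then (1/C(N,k)) · Σ_{S ⊆ Fin N, |S|=k} (Σ_{i∈S} R(i))² − (k(N+1)/2)² = (k(N−k)/(N−1)) · ( (1/N)·Σ_{i} R(i)² − (N+1)²/4 ). (This expresses that in the presence of ties, the rank-sum statistic W with sample sizes n₁ = k and n₂ = N − k has variance Var(W) = (n₁n₂/(n₁+n₂−1))·( (1/(n₁+n₂))·Σᵢ Rᵢ² − (n₁+n₂+1)²/4 ) under the null hypothesis.) -/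
/-! Expanding the square, `∑_S (∑_{i ∈ S} R i)² = ∑_{i,j} c(i,j) R i R j`, where `c(i,j)` counts
the `k`-subsets containing both `i` and `j`. This count only depends on whether `i = j`: it is
`C(N,k) k / N` on the diagonal and `C(N,k) k (k-1) / (N (N-1))` off it. Hence the second moment is
a combination of `(∑ R)²` and `∑ R²`, and the constraint on `∑ R` gives the formula. -/

open Finset

namespace Finset

variable {α : Type*} [DecidableEq α]

-- Unlike `card_filter_powersetCard_subset`, this form also holds when `#t > k`.
theorem card_filter_powersetCard_subset_mul_choose {s t : Finset α} (k : ℕ) (hts : t ⊆ s) :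
    #((s.powersetCard k).filter (t ⊆ ·)) * (#s).choose #t = (#s).choose k * k.choose #t := by
  rcases le_or_gt #t k with htk | hkt
  · rw [card_filter_powersetCard_subset t s k hts htk, mul_comm, ← Nat.choose_mul htk]
  · have hempty : (s.powersetCard k).filter (t ⊆ ·) = ∅ :=
      filter_false_of_mem fun S hS htS =>
        hkt.not_ge ((card_le_card htS).trans (mem_powersetCard.1 hS).2.le)
    rw [hempty, Nat.choose_eq_zero_of_lt hkt]
    simp

theorem cast_card_filter_powersetCard_mem_mem {K : Type*} [Field K] [CharZero K] [Fintype α]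
    (hα : 1 < Fintype.card α) (k : ℕ) (i j : α) :
    (#((univ.powersetCard k).filter fun S => i ∈ S ∧ j ∈ S) : K) =
      (Fintype.card α).choose k * k / (Fintype.card α * (Fintype.card α - 1)) *
        (k - 1 + (Fintype.card α - k) * if i = j then 1 else 0) := by
  have hpair : (univ.powersetCard k).filter (fun S => i ∈ S ∧ j ∈ S) =
      (univ.powersetCard k).filter ({i, j} ⊆ ·) := by
    simp only [insert_subset_iff, singleton_subset_iff]
  have hcount := congrArg (Nat.cast : ℕ → K)
    (card_filter_powersetCard_subset_mul_choose k (subset_univ {i, j}))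
  rw [card_univ] at hcount
  rw [hpair]
  set n := Fintype.card α
  have hn : (n : K) ≠ 0 := Nat.cast_ne_zero.2 (by omega)
  have hn1 : (n : K) - 1 ≠ 0 := by
    rw [sub_ne_zero]; exact_mod_cast hα.ne'
  obtain rfl | hij := eq_or_ne i j
  · simp only [pair_eq_singleton, card_singleton, Nat.choose_one_right, Nat.cast_mul,
      if_true] at hcount ⊢
    field_simp
    linear_combination (n - 1 : K) * hcount
  · simp only [card_pair hij, Nat.cast_mul, Nat.cast_choose_two] at hcount
    simp only [hij, if_false]
    field_simp
    linear_combination 2 * hcount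

theorem sum_sq_sum_eq_sum_sum_card_filter_mem {R : Type*} [CommSemiring R] [Fintype α]
    (𝒜 : Finset (Finset α)) (f : α → R) :
    ∑ S ∈ 𝒜, (∑ i ∈ S, f i) ^ 2 =
      ∑ i, ∑ j, #(𝒜.filter fun S => i ∈ S ∧ j ∈ S) • (f i * f j) := by
  have hsq (S : Finset α) : (∑ i ∈ S, f i) ^ 2 =
      ∑ i, ∑ j, if i ∈ S ∧ j ∈ S then f i * f j else 0 := by
    simp only [sq, sum_mul_sum, ite_and, sum_ite_irrel, sum_ite_mem, univ_inter, sum_const_zero]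
  simp only [hsq, card_eq_sum_ones, sum_filter, sum_smul, ite_smul, one_smul, zero_smul]
  rw [sum_comm]
  exact sum_congr rfl fun i _ => sum_comm

theorem sum_powersetCard_sq_sum {K : Type*} [Field K] [CharZero K] [Fintype α]
    (hα : 1 < Fintype.card α) (k : ℕ) (f : α → K) :
    ∑ S ∈ univ.powersetCard k, (∑ i ∈ S, f i) ^ 2 =
      (Fintype.card α).choose k * k / (Fintype.card α * (Fintype.card α - 1)) *
        ((k - 1) * (∑ i, f i) ^ 2 + (Fintype.card α - k) * ∑ i, f i ^ 2) := by
  simp only [sum_sq_sum_eq_sum_sum_card_filter_mem, nsmul_eq_mul,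
    cast_card_filter_powersetCard_mem_mem hα]
  simp only [mul_add, add_mul, sum_add_distrib, mul_ite, ite_mul, mul_one, mul_zero, zero_mul,
    sum_ite_eq, mem_univ, if_true, ← mul_sum, ← sum_mul, sq]
  ring

end Finset

theorem rank_sum_variance_with_ties_general (N k : ℕ) (hN : 2 ≤ N)
    (hkN : k ≤ N) (R : Fin N → ℝ)
    (hsum : ∑ i, R i = (N : ℝ) * ((N : ℝ) + 1) / 2) :
    (1 / (N.choose k : ℝ)) *
        (∑ S ∈ Finset.powersetCard k (Finset.univ : Finset (Fin N)),
          (∑ i ∈ S, R i) ^ 2) -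
      ((k : ℝ) * ((N : ℝ) + 1) / 2) ^ 2 =
    ((k : ℝ) * ((N : ℝ) - (k : ℝ)) / ((N : ℝ) - 1)) *
      ((1 / (N : ℝ)) * ∑ i, (R i) ^ 2 - ((N : ℝ) + 1) ^ 2 / 4) := by
  have hN' : 1 < Fintype.card (Fin N) := by rw [Fintype.card_fin]; omega
  rw [sum_powersetCard_sq_sum hN', Fintype.card_fin, hsum]
  have hC : (N.choose k : ℝ) ≠ 0 := Nat.cast_ne_zero.2 (Nat.choose_pos hkN).ne'
  have hN0 : (N : ℝ) ≠ 0 := Nat.cast_ne_zero.2 (by omega)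
  have hN1 : (N : ℝ) - 1 ≠ 0 := by
    rw [sub_ne_zero]; exact_mod_cast (by omega : N ≠ 1)
  field_simp
  ring

/-- Variance of the rank-sum statistic in the presence of ties: if the ranks
`R : Fin N → ℝ` sum to `N(N+1)/2`, then, with sums over all `k`-element subsets
`S` of `Fin N`,
`(1/C(N,k)) Σ_S (Σ_{i∈S} R i)² − (k(N+1)/2)²
  = (k(N−k)/(N−1)) · ( (1/N) Σ_i (R i)² − (N+1)²/4 )`,
i.e. `Var(W) = (n₁n₂/(n₁+n₂−1)) ( (1/(n₁+n₂)) Σᵢ Rᵢ² − (n₁+n₂+1)²/4 )`. -/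
theorem rank_sum_variance_with_ties (N k : ℕ) (hN : 2 ≤ N) (hk : 1 ≤ k)
    (hkN : k ≤ N) (R : Fin N → ℝ)
    (hsum : ∑ i, R i = (N : ℝ) * ((N : ℝ) + 1) / 2) :
    (1 / (N.choose k : ℝ)) *
        (∑ S ∈ Finset.powersetCard k (Finset.univ : Finset (Fin N)),
          (∑ i ∈ S, R i) ^ 2) -
      ((k : ℝ) * ((N : ℝ) + 1) / 2) ^ 2 =
    ((k : ℝ) * ((N : ℝ) - (k : ℝ)) / ((N : ℝ) - 1)) *
      ((1 / (N : ℝ)) * ∑ i, (R i) ^ 2 - ((N : ℝ) + 1) ^ 2 / 4) :=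
  rank_sum_variance_with_ties_general N k hN hkN R hsum
end

section
/- For natural numbers N and k with k ≤ N, let G ∈ ℤ[q] be the polynomial G(q) = Σ_{v} p_k(v, N−k)·q^v (the Gaussian binomial coefficient [N choose k]_q expressed as the generating polynomial of partitions into at most k parts each at most N−k). Then the formal derivative of G evaluated at q = 1 satisfies 2·G′(1) = C(N,k) · k · (N−k). (Combined with G(1) = C(N,k), this yields, by logarithmic differentiation of q^{k(k+1)/2}·[N choose k]_q at q = 1, the expected value E(W) = k(N+1)/2 of the rank-sum statistic.) -/
/-!
`G′(1) = Σ_v v · p_k(v, m)` with `m = N − k`. Padding a partition with zeros identifies the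
partitions counted by `p_k(·, m)` with the `C(m + k, k)` multisets of size `k` drawn from
`{0, …, m}`, the weight `v` becoming the sum of the multiset. Replacing every entry `x` by
`m − x` is an involution of these multisets sending sum `v` to `k m − v`, so twice the total
weight is `C(m + k, k) · k m`.
-/

/-- `pCount ℓ m w` is the number of partitions of `w` into at most `ℓ` parts,
with every part in `{1, 2, …, m}`. -/
def pCount (ℓ m w : ℕ) : ℕ :=
  (Finset.univ.filter
    (fun P : Nat.Partition w => P.parts.card ≤ ℓ ∧ ∀ x ∈ P.parts, x ≤ m)).card

open Finset

theorem Finset.card_sym {α : Type*} [DecidableEq α] (s : Finset α) (n : ℕ) :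
    #(s.sym n) = (#s + n - 1).choose n := by
  rw [← s.attach_map_val, sym_map, card_map, ← univ_eq_attach, sym_univ, card_univ,
    Sym.card_sym_eq_choose, Fintype.card_coe, card_map, card_univ, Fintype.card_coe]

theorem Multiset.filter_ne_zero_add_replicate_count_zero (s : Multiset ℕ) :
    s.filter (· ≠ 0) + replicate (s.count 0) 0 = s := by
  rw [← filter_eq', ← filter_add_not (· ≠ 0) s]
  simp

theorem Multiset.sum_map_tsub_add_sum {m : ℕ} (s : Multiset ℕ) (h : ∀ x ∈ s, x ≤ m) :
    (s.map (m - ·)).sum + s.sum = card s * m := by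
  calc (s.map (m - ·)).sum + s.sum = (s.map fun x => m - x + x).sum := by
        rw [sum_map_add, map_id']
    _ = (s.map fun _ => m).sum := by
        rw [map_congr rfl fun x hx => Nat.sub_add_cancel (h x hx)]
    _ = card s * m := by simp

theorem Polynomial.eval_one_derivative_sum_C_mul_X_pow {R : Type*} [CommSemiring R]
    (s : Finset ℕ) (a : ℕ → R) :
    (derivative (∑ v ∈ s, C (a v) * X ^ v)).eval 1 = ∑ v ∈ s, v * a v := by
  rw [map_sum, eval_finsetSum]
  refine Finset.sum_congr rfl fun v _ => ?_
  rw [derivative_C_mul_X_pow, eval_mul, eval_C, eval_pow, eval_X, one_pow, mul_one, mul_comm]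

section

variable (k m : ℕ)

variable {k m} in
theorem le_of_mem_sym_range {μ : Sym ℕ k} (hμ : μ ∈ (range (m + 1)).sym k) {x : ℕ}
    (hx : x ∈ μ) : x ≤ m :=
  Nat.lt_succ_iff.mp (mem_range.mp (mem_sym_iff.mp hμ x hx))

theorem pCount_eq_card_filter_sym (w : ℕ) :
    pCount k m w = #{μ ∈ (range (m + 1)).sym k | μ.toMultiset.sum = w} := by
  refine card_bij'
    (fun P hP => Sym.mk (P.parts + Multiset.replicate (k - Multiset.card P.parts) 0)
      (by simp [Nat.add_sub_cancel' (mem_filter.mp hP).2.1]))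
    (fun μ hμ => Nat.Partition.ofSums w μ (mem_filter.mp hμ).2) ?_ ?_ ?_ ?_
  · intro P hP
    obtain ⟨-, -, hle⟩ := mem_filter.mp hP
    refine mem_filter.mpr ⟨mem_sym_iff.mpr fun x hx => ?_, by simp [P.parts_sum]⟩
    rcases Multiset.mem_add.mp hx with hx | hx
    · exact mem_range.mpr (Nat.lt_succ_of_le (hle x hx))
    · simp [Multiset.eq_of_mem_replicate hx]
  · intro μ hμ
    obtain ⟨hμS, -⟩ := mem_filter.mp hμ
    refine mem_filter.mpr ⟨mem_univ _, ?_, fun x hx => ?_⟩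
    · exact (Multiset.card_le_card (Multiset.filter_le _ _)).trans_eq μ.card_coe
    · exact le_of_mem_sym_range hμS (Multiset.mem_of_mem_filter hx)
  · intro P _
    ext1
    simp only [Nat.Partition.ofSums_parts, Sym.coe_mk, Multiset.filter_add]
    rw [Multiset.filter_eq_self.mpr fun a ha => (P.parts_pos ha).ne',
      Multiset.filter_eq_nil.mpr fun a ha => by simp [Multiset.eq_of_mem_replicate ha], add_zero]
  · intro μ _
    have hsplit := Multiset.filter_ne_zero_add_replicate_count_zero μ.toMultiset
    have hcount :
        k - Multiset.card (μ.toMultiset.filter (· ≠ 0)) = μ.toMultiset.count 0 := by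
      have hcard := congrArg Multiset.card hsplit
      rw [Multiset.card_add, Multiset.card_replicate, Sym.card_coe] at hcard
      omega
    exact Sym.coe_injective (by simpa [hcount] using hsplit)

theorem sum_mul_pCount_eq_sum_sym :
    ∑ v ∈ range (k * m + 1), v * pCount k m v
      = ∑ μ ∈ (range (m + 1)).sym k, μ.toMultiset.sum := by
  have hmaps : ∀ μ ∈ (range (m + 1)).sym k, μ.toMultiset.sum ∈ range (k * m + 1) := by
    intro μ hμ
    refine mem_range.mpr (Nat.lt_succ_of_le ?_)
    calc μ.toMultiset.sum ≤ Multiset.card μ.toMultiset • m :=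
          Multiset.sum_le_card_nsmul _ _ fun x hx => le_of_mem_sym_range hμ hx
      _ = k * m := by rw [Sym.card_coe, smul_eq_mul]
  rw [← sum_fiberwise_of_maps_to hmaps]
  refine sum_congr rfl fun v _ => ?_
  rw [pCount_eq_card_filter_sym, sum_congr rfl fun μ hμ => (mem_filter.mp hμ).2, sum_const,
    smul_eq_mul, mul_comm]

theorem two_mul_sum_sym_range_sum :
    2 * ∑ μ ∈ (range (m + 1)).sym k, μ.toMultiset.sum = #((range (m + 1)).sym k) * (k * m) := by
  set S := (range (m + 1)).sym k
  let c : Sym ℕ k → Sym ℕ k := Sym.map (m - ·)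
  have hc : ∀ μ ∈ S, c μ ∈ S := fun μ _ => mem_sym_iff.mpr fun x hx => by
    obtain ⟨y, -, rfl⟩ := Sym.mem_map.mp hx
    exact mem_range.mpr (Nat.lt_succ_of_le (Nat.sub_le m y))
  have hinv : ∀ μ ∈ S, c (c μ) = μ := fun μ hμ => by
    simp only [c, Sym.map_map]
    exact (Sym.map_congr fun x hx => Nat.sub_sub_self (le_of_mem_sym_range hμ hx)).trans
      (Sym.map_id' μ)
  have hreflect : ∑ μ ∈ S, (c μ).toMultiset.sum = ∑ μ ∈ S, μ.toMultiset.sum :=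
    sum_nbij' c c hc hc hinv hinv fun _ _ => rfl
  calc 2 * ∑ μ ∈ S, μ.toMultiset.sum
      = ∑ μ ∈ S, ((c μ).toMultiset.sum + μ.toMultiset.sum) := by
        rw [sum_add_distrib, hreflect, two_mul]
    _ = ∑ _μ ∈ S, k * m := sum_congr rfl fun μ hμ =>
        (Multiset.sum_map_tsub_add_sum _ fun x hx => le_of_mem_sym_range hμ hx).trans
          (congrArg (· * m) μ.card_coe)
    _ = #S * (k * m) := by rw [sum_const, smul_eq_mul]

theorem two_mul_sum_mul_pCount :
    2 * ∑ v ∈ range (k * m + 1), v * pCount k m v = (m + k).choose k * (k * m) := by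
  rw [sum_mul_pCount_eq_sum_sym, two_mul_sum_sym_range_sum, card_sym, card_range,
    Nat.add_right_comm, Nat.add_sub_cancel]

end

/-- Let `G(q) = Σ_v p_k(v, N−k) q^v ∈ ℤ[q]` be the Gaussian binomial coefficient
`[N choose k]_q` written as the generating polynomial of partitions into at most
`k` parts each at most `N−k`.  Then `2 · G′(1) = C(N,k) · k · (N−k)`.  (Together
with `G(1) = C(N,k)`, logarithmic differentiation of `q^{k(k+1)/2} [N choose k]_q`
at `q = 1` gives `E(W) = k(N+1)/2`.) -/
theorem gaussian_binomial_derivative_at_one (N k : ℕ) (hkN : k ≤ N) :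
    2 * (Polynomial.derivative
        (∑ v ∈ Finset.range (k * (N - k) + 1),
          Polynomial.C (pCount k (N - k) v : ℤ) * Polynomial.X ^ v)).eval 1 =
      (N.choose k : ℤ) * (k : ℤ) * ((N : ℤ) - (k : ℤ)) := by
  obtain ⟨m, rfl⟩ := Nat.exists_eq_add_of_le hkN
  rw [Polynomial.eval_one_derivative_sum_C_mul_X_pow, Nat.add_sub_cancel_left]
  have h := congrArg (Nat.cast : ℕ → ℤ) (two_mul_sum_mul_pCount k m)
  push_cast at h
  rw [h, add_comm k m]
  push_cast
  ring
end
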